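/- arXiv:2405.13481 — 2 statements merged into one kernel-verified Lean document; each statement's English description precedes it below -/
import Mathlib

section
/- For any integer $p \geq 0$ and dimension $m \geq 1$, consider any axis-aligned rectangle obtained from $[0,1]^m$ by $p$ successive max-edge midpoint splits (at each step, an edge of maximal length is bisected). Then every edge of the resulting rectangle has length between $2^{-\lceil p/m \rceil}$ and $2^{-\lfloor p/m \rfloor}$, and consequently the Euclidean diameter of the rectangle is between $2^{-1}\sqrt{m}\, 2^{-p/m}$ and $2\sqrt{m}\, 2^{-p/m}$. -/
/-!
After `k` splits the edge in direction `j` has length `2 ^ (-c j)`, where `c j` counts the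
splits along `j` among the first `k`. A split is always made along a longest edge, i.e. in a
direction of minimal count, so the counts never differ by more than one; as they sum to `p`,
each lies between `⌊p/m⌋` and `⌈p/m⌉`. The diameter bounds follow from `⌈x⌉ < x + 1` and
`x - 1 < ⌊x⌋`.
-/

open Finset

lemma inv_mul_rpow_neg_le_zpow_neg_ceil {b : ℝ} (hb : 1 ≤ b) (x : ℝ) :
    b⁻¹ * b ^ (-x) ≤ b ^ (-⌈x⌉) := by
  rw [inv_mul_eq_div, ← Real.rpow_sub_one (by positivity), ← Real.rpow_intCast]
  refine Real.rpow_le_rpow_of_exponent_le hb ?_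
  push_cast
  linarith [Int.ceil_lt_add_one x]

lemma zpow_neg_floor_le_mul_rpow_neg {b : ℝ} (hb : 1 ≤ b) (x : ℝ) :
    b ^ (-⌊x⌋) ≤ b * b ^ (-x) := by
  rw [mul_comm, ← Real.rpow_add_one (by positivity), ← Real.rpow_intCast]
  refine Real.rpow_le_rpow_of_exponent_le hb ?_
  push_cast
  linarith [Int.sub_one_lt_floor x]

section

variable {ι : Type*}

section SumBounds

variable [Fintype ι] {f : ι → ℝ}

lemma sum_div_card_lt_add_one (hf : ∀ i j, f i ≤ f j + 1) (i : ι) :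
    (∑ j, f j) / Fintype.card ι < f i + 1 := by
  have hcard : (0 : ℝ) < Fintype.card ι := Nat.cast_pos.mpr (Fintype.card_pos_iff.mpr ⟨i⟩)
  rw [div_lt_iff₀ hcard, mul_comm, ← nsmul_eq_mul, ← card_univ, ← sum_const]
  exact sum_lt_sum (fun j _ => hf j i) ⟨i, mem_univ i, lt_add_one (f i)⟩

lemma sub_one_lt_sum_div_card (hf : ∀ i j, f i ≤ f j + 1) (i : ι) :
    f i - 1 < (∑ j, f j) / Fintype.card ι := by
  have hcard : (0 : ℝ) < Fintype.card ι := Nat.cast_pos.mpr (Fintype.card_pos_iff.mpr ⟨i⟩)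
  rw [lt_div_iff₀ hcard, mul_comm, ← nsmul_eq_mul, ← card_univ, ← sum_const]
  exact sum_lt_sum (fun j _ => by linarith [hf i j]) ⟨i, mem_univ i, sub_one_lt (f i)⟩

lemma floor_sum_div_card_le {n : ι → ℤ} (hn : ∀ i j, n i ≤ n j + 1) (i : ι) :
    ⌊(∑ j, (n j : ℝ)) / Fintype.card ι⌋ ≤ n i := by
  have := sum_div_card_lt_add_one (f := fun j => (n j : ℝ)) (fun i j => by exact_mod_cast hn i j) i
  rw [← Int.lt_add_one_iff, Int.floor_lt]
  exact_mod_cast this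

lemma le_ceil_sum_div_card {n : ι → ℤ} (hn : ∀ i j, n i ≤ n j + 1) (i : ι) :
    n i ≤ ⌈(∑ j, (n j : ℝ)) / Fintype.card ι⌉ := by
  have := sub_one_lt_sum_div_card (f := fun j => (n j : ℝ)) (fun i j => by exact_mod_cast hn i j) i
  rw [← Int.sub_one_lt_iff, Int.lt_ceil]
  exact_mod_cast this

lemma sqrt_card_mul_le_sqrt_sum_sq {A : ℝ} (hA : 0 ≤ A) (hf : ∀ j, A ≤ f j) :
    √(Fintype.card ι) * A ≤ √(∑ j, f j ^ 2) := by
  rw [← Real.sqrt_sq hA, ← Real.sqrt_mul (Nat.cast_nonneg _)]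
  refine Real.sqrt_le_sqrt ?_
  rw [← nsmul_eq_mul, ← card_univ, ← sum_const]
  exact sum_le_sum fun j _ => pow_le_pow_left₀ hA (hf j) 2

lemma sqrt_sum_sq_le_sqrt_card_mul {B : ℝ} (hB : 0 ≤ B) (hf : ∀ j, |f j| ≤ B) :
    √(∑ j, f j ^ 2) ≤ √(Fintype.card ι) * B := by
  rw [← Real.sqrt_sq hB, ← Real.sqrt_mul (Nat.cast_nonneg _)]
  refine Real.sqrt_le_sqrt ?_
  rw [← nsmul_eq_mul, ← card_univ, ← sum_const]
  exact sum_le_sum fun j _ => sq_le_sq' (abs_le.mp (hf j)).1 (abs_le.mp (hf j)).2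

end SumBounds

section SplitCount

variable [DecidableEq ι] (ℓ : ℕ → ι)

def splitCount (k : ℕ) (j : ι) : ℕ := #{i ∈ range k | ℓ i = j}

@[simp]
lemma splitCount_zero (j : ι) : splitCount ℓ 0 j = 0 := rfl

lemma splitCount_succ (k : ℕ) (j : ι) :
    splitCount ℓ (k + 1) j = splitCount ℓ k j + if ℓ k = j then 1 else 0 := by
  simp only [splitCount, card_filter, sum_range_succ]

lemma sum_splitCount [Fintype ι] (k : ℕ) : ∑ j, splitCount ℓ k j = k :=
  (card_eq_sum_card_fiberwise fun i _ => mem_univ (ℓ i)).symm.trans (card_range k)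

end SplitCount

structure IsMaxEdgeSplitting [DecidableEq ι] (p : ℕ) (len : ℕ → ι → ℝ) (ℓ : ℕ → ι) : Prop where
  len_zero : ∀ j, len 0 j = 1
  len_le_len_split : ∀ k < p, ∀ j, len k j ≤ len k (ℓ k)
  len_succ : ∀ k < p, ∀ j, len (k + 1) j = if j = ℓ k then len k j / 2 else len k j

namespace IsMaxEdgeSplitting

variable [DecidableEq ι] {p : ℕ} {len : ℕ → ι → ℝ} {ℓ : ℕ → ι}

lemma len_eq_two_zpow (h : IsMaxEdgeSplitting p len ℓ) {k : ℕ} (hk : k ≤ p) (j : ι) :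
    len k j = 2 ^ (-(splitCount ℓ k j : ℤ)) := by
  induction k generalizing j with
  | zero => simp [h.len_zero]
  | succ k ih =>
    rw [h.len_succ k hk j, splitCount_succ, ih (by omega)]
    by_cases hj : j = ℓ k
    · subst hj
      simp [zpow_add₀, div_eq_mul_inv, mul_comm]
    · simp [hj, Ne.symm hj]

lemma splitCount_le_add_one (h : IsMaxEdgeSplitting p len ℓ) {k : ℕ} (hk : k ≤ p) (j j' : ι) :
    splitCount ℓ k j ≤ splitCount ℓ k j' + 1 := by
  induction k with
  | zero => simp
  | succ k ih =>
    have hmin : splitCount ℓ k (ℓ k) ≤ splitCount ℓ k j' := by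
      have hle := h.len_le_len_split k hk j'
      rw [h.len_eq_two_zpow (by omega), h.len_eq_two_zpow (by omega),
        zpow_le_zpow_iff_right₀ one_lt_two] at hle
      omega
    have := ih (by omega)
    rw [splitCount_succ, splitCount_succ]
    obtain rfl | hj := eq_or_ne (ℓ k) j
    · split_ifs <;> omega
    · rw [if_neg hj]
      split_ifs <;> omega

lemma len_mem_Icc [Fintype ι] (h : IsMaxEdgeSplitting p len ℓ) (j : ι) :
    len p j ∈ Set.Icc ((2 : ℝ) ^ (-⌈(p : ℝ) / Fintype.card ι⌉))
      ((2 : ℝ) ^ (-⌊(p : ℝ) / Fintype.card ι⌋)) := by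
  have hp : (p : ℝ) = ∑ j, ((splitCount ℓ p j : ℤ) : ℝ) := by
    exact_mod_cast (sum_splitCount ℓ p).symm
  have hbal : ∀ i j, (splitCount ℓ p i : ℤ) ≤ splitCount ℓ p j + 1 := fun i j => by
    exact_mod_cast h.splitCount_le_add_one le_rfl i j
  rw [h.len_eq_two_zpow le_rfl, hp]
  exact ⟨zpow_le_zpow_right₀ one_le_two (neg_le_neg (le_ceil_sum_div_card hbal j)),
    zpow_le_zpow_right₀ one_le_two (neg_le_neg (floor_sum_div_card_le hbal j))⟩

end IsMaxEdgeSplitting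

end

theorem max_edge_cell_diameter_general (p m : ℕ)
    (len : ℕ → Fin m → ℝ) (ℓ : ℕ → Fin m)
    (h0 : ∀ j, len 0 j = 1)
    (hmax : ∀ k, k < p → ∀ j, len k j ≤ len k (ℓ k))
    (hstep : ∀ k, k < p → ∀ j, len (k + 1) j = if j = ℓ k then len k j / 2 else len k j) :
    (∀ j, (2 : ℝ) ^ (-(⌈(p : ℝ) / m⌉ : ℤ)) ≤ len p j ∧
      len p j ≤ (2 : ℝ) ^ (-(⌊(p : ℝ) / m⌋ : ℤ))) ∧
    2⁻¹ * Real.sqrt m * (2 : ℝ) ^ (-((p : ℝ) / m)) ≤ Real.sqrt (∑ j, (len p j) ^ 2) ∧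
    Real.sqrt (∑ j, (len p j) ^ 2) ≤ 2 * Real.sqrt m * (2 : ℝ) ^ (-((p : ℝ) / m)) := by
  have hedge := IsMaxEdgeSplitting.len_mem_Icc ⟨h0, hmax, hstep⟩
  simp only [Fintype.card_fin, Set.mem_Icc] at hedge
  set x : ℝ := p / m
  have hA : (0 : ℝ) ≤ 2 ^ (-⌈x⌉) := by positivity
  refine ⟨hedge, ?_, ?_⟩
  · calc 2⁻¹ * √m * 2 ^ (-x) = √m * (2⁻¹ * 2 ^ (-x)) := by ring
      _ ≤ √m * 2 ^ (-⌈x⌉) := by gcongr; exact inv_mul_rpow_neg_le_zpow_neg_ceil one_le_two x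
      _ ≤ √(∑ j, len p j ^ 2) := by
        simpa using sqrt_card_mul_le_sqrt_sum_sq hA fun j => (hedge j).1
  · calc √(∑ j, len p j ^ 2) ≤ √m * 2 ^ (-⌊x⌋) := by
          simpa using sqrt_sum_sq_le_sqrt_card_mul (by positivity)
            fun j => (abs_of_nonneg (hA.trans (hedge j).1)).trans_le (hedge j).2
      _ ≤ √m * (2 * 2 ^ (-x)) := by gcongr; exact zpow_neg_floor_le_mul_rpow_neg one_le_two x
      _ = 2 * √m * 2 ^ (-x) := by ring

/-- Max-edge midpoint splitting of `[0,1]^m`: record the edge lengths `len k` of the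
cell after `k` splits, starting from all edges of length `1`; at each step `k < p` the
split dimension `ℓ k` has maximal edge length and that edge is halved. After `p` splits,
every edge has length between `2^{-⌈p/m⌉}` and `2^{-⌊p/m⌋}`, and consequently the
Euclidean diameter `√(∑ len p j ²)` lies between `2⁻¹ √m · 2^{-p/m}` and
`2 √m · 2^{-p/m}`. -/
theorem max_edge_cell_diameter (p m : ℕ) (hm : 1 ≤ m)
    (len : ℕ → Fin m → ℝ) (ℓ : ℕ → Fin m)
    (h0 : ∀ j, len 0 j = 1)
    (hmax : ∀ k, k < p → ∀ j, len k j ≤ len k (ℓ k))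
    (hstep : ∀ k, k < p → ∀ j, len (k + 1) j = if j = ℓ k then len k j / 2 else len k j) :
    (∀ j, (2 : ℝ) ^ (-(⌈(p : ℝ) / m⌉ : ℤ)) ≤ len p j ∧
      len p j ≤ (2 : ℝ) ^ (-(⌊(p : ℝ) / m⌋ : ℤ))) ∧
    2⁻¹ * Real.sqrt m * (2 : ℝ) ^ (-((p : ℝ) / m)) ≤ Real.sqrt (∑ j, (len p j) ^ 2) ∧
    Real.sqrt (∑ j, (len p j) ^ 2) ≤ 2 * Real.sqrt m * (2 : ℝ) ^ (-((p : ℝ) / m)) :=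
  max_edge_cell_diameter_general p m len ℓ h0 hmax hstep
end

section
/- Let $p_1, p_2 : \mathcal{Z} \to [0,\infty)$ be probability densities with respect to a common measure such that the total variation distance $V(p_1, p_2) = \frac{1}{2}\int |p_1 - p_2|$ is finite, and suppose additionally that $p_1(z)/p_2(z) \leq e^\varepsilon$ and $p_2(z)/p_1(z) \leq e^\varepsilon$ for all $z$. Then the Kullback–Leibler divergence satisfies $KL(p_1 \| p_2) + KL(p_2 \| p_1) \leq 2(e^\varepsilon - 1) V(p_1, p_2) \leq (e^\varepsilon - 1) \int |p_1(z) - p_2(z)| \, dz$. -/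
open MeasureTheory

/-- KL–TV–likelihood-ratio inequality for private channels: if two probability
densities `p₁, p₂` (w.r.t. a common measure `ν`) have pointwise likelihood ratio
bounded by `e^ε` in both directions, then
`KL(p₁‖p₂) + KL(p₂‖p₁) ≤ 2(e^ε - 1) V(p₁,p₂) ≤ (e^ε - 1) ∫ |p₁ - p₂|`,
where `V(p₁,p₂) = ½∫|p₁ - p₂|` is the total variation distance. -/
theorem kl_tv_likelihood_ratio {Z : Type*} [MeasurableSpace Z] (ν : Measure Z)
    (ε : ℝ) (hε : 0 ≤ ε)
    (p1 p2 : Z → ℝ) (h1 : ∀ z, 0 ≤ p1 z) (h2 : ∀ z, 0 ≤ p2 z)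
    (hm1 : Measurable p1) (hm2 : Measurable p2)
    (hp1 : ∫ z, p1 z ∂ν = 1) (hp2 : ∫ z, p2 z ∂ν = 1)
    (hi1 : Integrable p1 ν) (hi2 : Integrable p2 ν)
    (hr1 : ∀ z, p1 z ≤ Real.exp ε * p2 z) (hr2 : ∀ z, p2 z ≤ Real.exp ε * p1 z) :
    (∫ z, p1 z * Real.log (p1 z / p2 z) ∂ν) + (∫ z, p2 z * Real.log (p2 z / p1 z) ∂ν)
        ≤ 2 * (Real.exp ε - 1) * ((1 / 2) * ∫ z, |p1 z - p2 z| ∂ν) ∧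
    2 * (Real.exp ε - 1) * ((1 / 2) * ∫ z, |p1 z - p2 z| ∂ν)
        ≤ (Real.exp ε - 1) * ∫ z, |p1 z - p2 z| ∂ν := by
  have hεe : ε ≤ Real.exp ε - 1 := by linarith [Real.add_one_le_exp ε]
  -- pointwise log-ratio bound when both positive
  have hlog : ∀ z, 0 < p1 z → 0 < p2 z → |Real.log (p1 z / p2 z)| ≤ ε := by
    intro z h1z h2z
    rw [abs_le]
    constructor
    · have : p2 z / p1 z ≤ Real.exp ε := by
        rw [div_le_iff₀ h1z]; linarith [hr2 z]
      have := Real.log_le_log (by positivity) this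
      rw [Real.log_exp, Real.log_div (ne_of_gt h2z) (ne_of_gt h1z)] at this
      rw [Real.log_div (ne_of_gt h1z) (ne_of_gt h2z)]
      linarith
    · have : p1 z / p2 z ≤ Real.exp ε := by
        rw [div_le_iff₀ h2z]; linarith [hr1 z]
      have := Real.log_le_log (by positivity) this
      rwa [Real.log_exp] at this
  have hzero : ∀ z, p1 z = 0 → p2 z = 0 := fun z h => le_antisymm (by
    have := hr2 z; rw [h] at this; simpa using this) (h2 z)
  have hzero' : ∀ z, p2 z = 0 → p1 z = 0 := fun z h => le_antisymm (by
    have := hr1 z; rw [h] at this; simpa using this) (h1 z)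
  -- integrability of both KL integrands
  have habs1 : ∀ z, |p1 z * Real.log (p1 z / p2 z)| ≤ ε * p1 z := by
    intro z
    rcases eq_or_lt_of_le (h1 z) with h | h
    · simp [← h]
    · have h2z : 0 < p2 z := lt_of_le_of_ne (h2 z) (fun e => by
        have := hzero' z e.symm; exact absurd this (ne_of_gt h))
      rw [abs_mul, abs_of_pos h]
      calc p1 z * |Real.log (p1 z / p2 z)| ≤ p1 z * ε :=
            mul_le_mul_of_nonneg_left (hlog z h h2z) (le_of_lt h)
        _ = ε * p1 z := mul_comm _ _
  have habs2 : ∀ z, |p2 z * Real.log (p2 z / p1 z)| ≤ ε * p2 z := by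
    intro z
    rcases eq_or_lt_of_le (h2 z) with h | h
    · simp [← h]
    · have h1z : 0 < p1 z := lt_of_le_of_ne (h1 z) (fun e => by
        have := hzero z e.symm; exact absurd this (ne_of_gt h))
      rw [abs_mul, abs_of_pos h]
      have hl : |Real.log (p2 z / p1 z)| ≤ ε := by
        rw [Real.log_div (ne_of_gt h) (ne_of_gt h1z), ← neg_sub, abs_neg,
          ← Real.log_div (ne_of_gt h1z) (ne_of_gt h)]
        exact hlog z h1z h
      calc p2 z * |Real.log (p2 z / p1 z)| ≤ p2 z * ε :=
            mul_le_mul_of_nonneg_left hl (le_of_lt h)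
        _ = ε * p2 z := mul_comm _ _
  have hI1 : Integrable (fun z => p1 z * Real.log (p1 z / p2 z)) ν := by
    refine (hi1.const_mul ε).mono ?_ ?_
    · exact (hm1.mul ((hm1.div hm2).log)).aestronglyMeasurable
    · filter_upwards with z
      simp only [Real.norm_eq_abs, abs_of_nonneg hε, abs_mul, abs_of_nonneg (h1 z)]
      have := habs1 z
      rw [abs_mul, abs_of_nonneg (h1 z)] at this
      linarith
  have hI2 : Integrable (fun z => p2 z * Real.log (p2 z / p1 z)) ν := by
    refine (hi2.const_mul ε).mono ?_ ?_
    · exact (hm2.mul ((hm2.div hm1).log)).aestronglyMeasurable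
    · filter_upwards with z
      simp only [Real.norm_eq_abs, abs_of_nonneg hε, abs_mul, abs_of_nonneg (h2 z)]
      have := habs2 z
      rw [abs_mul, abs_of_nonneg (h2 z)] at this
      linarith
  have hIabs : Integrable (fun z => |p1 z - p2 z|) ν := (hi1.sub hi2).abs
  -- pointwise main inequality
  have hpt : ∀ z, p1 z * Real.log (p1 z / p2 z) + p2 z * Real.log (p2 z / p1 z)
      ≤ (Real.exp ε - 1) * |p1 z - p2 z| := by
    intro z
    rcases eq_or_lt_of_le (h1 z) with h | h
    · have h2z := hzero z h.symm
      simp [← h, h2z]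
    · have h2z : 0 < p2 z := lt_of_le_of_ne (h2 z) (fun e => by
        have := hzero' z e.symm; exact absurd this (ne_of_gt h))
      have hL : p1 z * Real.log (p1 z / p2 z) + p2 z * Real.log (p2 z / p1 z)
          = (p1 z - p2 z) * Real.log (p1 z / p2 z) := by
        rw [Real.log_div (ne_of_gt h) (ne_of_gt h2z),
          Real.log_div (ne_of_gt h2z) (ne_of_gt h)]
        ring
      rw [hL]
      calc (p1 z - p2 z) * Real.log (p1 z / p2 z)
          ≤ |(p1 z - p2 z) * Real.log (p1 z / p2 z)| := le_abs_self _
        _ = |p1 z - p2 z| * |Real.log (p1 z / p2 z)| := abs_mul _ _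
        _ ≤ |p1 z - p2 z| * ε :=
            mul_le_mul_of_nonneg_left (hlog z h h2z) (abs_nonneg _)
        _ ≤ |p1 z - p2 z| * (Real.exp ε - 1) :=
            mul_le_mul_of_nonneg_left hεe (abs_nonneg _)
        _ = (Real.exp ε - 1) * |p1 z - p2 z| := mul_comm _ _
  constructor
  · have key : (∫ z, p1 z * Real.log (p1 z / p2 z) ∂ν)
        + (∫ z, p2 z * Real.log (p2 z / p1 z) ∂ν)
        ≤ ∫ z, (Real.exp ε - 1) * |p1 z - p2 z| ∂ν := by
      rw [← integral_add hI1 hI2]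
      exact integral_mono (hI1.add hI2) (hIabs.const_mul _) hpt
    rw [integral_const_mul] at key
    linarith
  · rw [show (2 : ℝ) * (Real.exp ε - 1) * ((1 / 2) * ∫ z, |p1 z - p2 z| ∂ν)
      = (Real.exp ε - 1) * ∫ z, |p1 z - p2 z| ∂ν by ring]
end
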